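/- Let A₀ = [[√3, 1], [2, 1.3]], A₁ = [[√2, 10], [20, √7]], A₂ = [[-1, 0.1], [0.2, √5]] be real 2×2 matrices. Then the generalized spectral radius of {A₀, A₁, A₂} equals max{ρ(A₀), ρ(A₁), ρ(A₂)}; in particular {A₀, A₁, A₂} has the spectral finiteness property. -/

import Mathlib

open Matrix

/-- The spectral radius of a real 2×2 matrix: the maximum modulus of its
complex eigenvalues. -/
noncomputable def specRad (M : Matrix (Fin 2) (Fin 2) ℝ) : ℝ :=
  (spectralRadius ℂ (M.map Complex.ofReal)).toReal

/-- `prodsOfLen 𝒜 n` is the set `𝒜ⁿ` of all products of `n` matrices taken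
from `𝒜`. -/
def prodsOfLen (𝒜 : Set (Matrix (Fin 2) (Fin 2) ℝ)) (n : ℕ) :
    Set (Matrix (Fin 2) (Fin 2) ℝ) :=
  {M | ∃ l : List (Matrix (Fin 2) (Fin 2) ℝ),
    l.length = n ∧ (∀ X ∈ l, X ∈ 𝒜) ∧ M = l.prod}

/-- The generalized spectral radius of `𝒜`:
`sup_{n ≥ 1} max_{M ∈ 𝒜ⁿ} ρ(M)^(1/n)`. -/
noncomputable def gsr (𝒜 : Set (Matrix (Fin 2) (Fin 2) ℝ)) : ℝ :=
  sSup {x : ℝ | ∃ n : ℕ, 1 ≤ n ∧ ∃ M ∈ prodsOfLen 𝒜 n,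
    x = specRad M ^ ((1 : ℝ) / n)}

/-- `𝒜` has the spectral finiteness property if its generalized spectral
radius is realized as `ρ(M)^(1/n)` for some `n ≥ 1` and some `M ∈ 𝒜ⁿ`. -/
def hasSpectralFiniteness (𝒜 : Set (Matrix (Fin 2) (Fin 2) ℝ)) : Prop :=
  ∃ n : ℕ, 1 ≤ n ∧ ∃ M ∈ prodsOfLen 𝒜 n, gsr 𝒜 = specRad M ^ ((1 : ℝ) / n)


/-!
For positive weights `w`, the norm `‖diag(w)⁻¹ M diag(w)‖∞` (maximal weighted row sum) is
submultiplicative and dominates the spectral radius, so a bound `K` for it on `𝒜` gives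
`ρ(M)^(1/n) ≤ K` for every `M ∈ 𝒜ⁿ`, i.e. `ρ̂(𝒜) ≤ K`. Take for `w` the positive Perron
eigenvector `(s, 1)` of the nonnegative matrix `A₁`, with eigenvalue `λ = ρ(A₁)`: every weighted
row sum of `A₁` is then exactly `λ`, and those of `A₀` and `A₂` are smaller. Hence
`ρ̂ = ρ(A₁)`, attained by the product `A₁` of length one.
-/

section WeightedNorm

attribute [local instance] Matrix.linftyOpNormedRing Matrix.linftyOpNormedAlgebra

variable {n : Type*} [Fintype n] [DecidableEq n]

lemma linfty_opNorm_map_ofReal (M : Matrix n n ℝ) :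
    ‖M.map Complex.ofReal‖ = ‖M‖ := by
  simp only [linfty_opNorm_def, map_apply, Complex.nnnorm_real]

noncomputable def weightedNorm (w : n → ℝ) (M : Matrix n n ℝ) : ℝ :=
  ‖diagonal w⁻¹ * M * diagonal w‖

variable {w : n → ℝ}

lemma diagonal_inv_mul_diagonal (hw : ∀ i, w i ≠ 0) : diagonal w⁻¹ * diagonal w = 1 := by
  rw [diagonal_mul_diagonal, ← diagonal_one]
  exact congrArg diagonal (funext fun i => inv_mul_cancel₀ (hw i))

lemma diagonal_mul_diagonal_inv (hw : ∀ i, w i ≠ 0) : diagonal w * diagonal w⁻¹ = 1 := by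
  rw [diagonal_mul_diagonal, ← diagonal_one]
  exact congrArg diagonal (funext fun i => mul_inv_cancel₀ (hw i))

lemma weightedNorm_nonneg (w : n → ℝ) (M : Matrix n n ℝ) : 0 ≤ weightedNorm w M := norm_nonneg _

lemma weightedNorm_mul_le (hw : ∀ i, w i ≠ 0) (A B : Matrix n n ℝ) :
    weightedNorm w (A * B) ≤ weightedNorm w A * weightedNorm w B := by
  have h : diagonal w⁻¹ * (A * B) * diagonal w =
      (diagonal w⁻¹ * A * diagonal w) * (diagonal w⁻¹ * B * diagonal w) := by
    simp only [Matrix.mul_assoc, ← Matrix.mul_assoc (diagonal w), diagonal_mul_diagonal_inv hw,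
      Matrix.one_mul]
  exact (congrArg norm h).trans_le (norm_mul_le _ _)

lemma weightedNorm_one [Nonempty n] (hw : ∀ i, w i ≠ 0) : weightedNorm w 1 = 1 := by
  rw [weightedNorm, Matrix.mul_one, diagonal_inv_mul_diagonal hw, norm_one]

lemma weightedNorm_list_prod_le [Nonempty n] (hw : ∀ i, w i ≠ 0) {K : ℝ} {l : List (Matrix n n ℝ)}
    (h : ∀ X ∈ l, weightedNorm w X ≤ K) : weightedNorm w l.prod ≤ K ^ l.length := by
  induction l with
  | nil => rw [List.prod_nil, weightedNorm_one hw, List.length_nil, pow_zero]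
  | cons A l ih =>
    have hA := h A List.mem_cons_self
    have hl := ih fun X hX => h X (List.mem_cons_of_mem A hX)
    calc weightedNorm w (A * l.prod) ≤ weightedNorm w A * weightedNorm w l.prod :=
          weightedNorm_mul_le hw A l.prod
      _ ≤ K * K ^ l.length := by
          gcongr
          · exact weightedNorm_nonneg w _
          · exact (weightedNorm_nonneg w A).trans hA
      _ = K ^ (A :: l).length := by rw [List.length_cons, pow_succ']

lemma norm_le_weightedNorm_of_mem_spectrum [Nonempty n] (hw : ∀ i, w i ≠ 0) {M : Matrix n n ℝ}
    {z : ℂ} (hz : z ∈ spectrum ℂ (M.map Complex.ofReal)) : ‖z‖ ≤ weightedNorm w M := by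
  let d : (Matrix n n ℝ)ˣ :=
    ⟨diagonal w, diagonal w⁻¹, diagonal_mul_diagonal_inv hw, diagonal_inv_mul_diagonal hw⟩
  let f : Matrix n n ℝ →* Matrix n n ℂ := (Complex.ofRealHom.mapMatrix : Matrix n n ℝ →+* _)
  have hf : ∀ N : Matrix n n ℝ, f N = N.map Complex.ofReal := fun _ => rfl
  rw [← hf, ← spectrum.units_conjugate' (u := Units.map f d), Units.coe_map, Units.coe_map_inv,
    ← map_mul, ← map_mul] at hz
  have h := spectrum.norm_le_norm_of_mem hz
  rw [hf, linfty_opNorm_map_ofReal] at h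
  exact h

lemma weightedNorm_le_of_forall_sum_le (hw : ∀ i, 0 < w i) {K : ℝ} (hK : 0 ≤ K) {M : Matrix n n ℝ}
    (h : ∀ i, ∑ j, |M i j| * w j ≤ K * w i) : weightedNorm w M ≤ K := by
  rw [weightedNorm, linfty_opNorm_def, ← Real.coe_toNNReal K hK, NNReal.coe_le_coe,
    Finset.sup_le_iff]
  intro i _
  rw [← NNReal.coe_le_coe, Real.coe_toNNReal K hK, NNReal.coe_sum]
  simp only [mul_diagonal, diagonal_mul, coe_nnnorm, Real.norm_eq_abs, abs_mul, abs_inv,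
    abs_of_pos (hw _), Pi.inv_apply]
  calc ∑ j, (w i)⁻¹ * |M i j| * w j = (w i)⁻¹ * ∑ j, |M i j| * w j := by
        simp only [Finset.mul_sum, mul_assoc]
    _ ≤ (w i)⁻¹ * (K * w i) := mul_le_mul_of_nonneg_left (h i) (inv_nonneg.mpr (hw i).le)
    _ = K := by field_simp [(hw i).ne']

lemma weightedNorm_le_of_mulVec_eq (hw : ∀ i, 0 < w i) {A : Matrix n n ℝ} (hA : ∀ i j, 0 ≤ A i j)
    {r : ℝ} (hr : 0 ≤ r) (h : A *ᵥ w = r • w) : weightedNorm w A ≤ r := by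
  refine weightedNorm_le_of_forall_sum_le hw hr fun i => (congrFun h i).le.trans_eq' ?_
  simp only [mulVec, dotProduct, abs_of_nonneg (hA i _)]

lemma ofReal_mem_spectrum_of_mulVec_eq {A : Matrix n n ℝ} {v : n → ℝ} {r : ℝ} (hv : v ≠ 0)
    (h : A *ᵥ v = r • v) :
    (r : ℂ) ∈ spectrum ℂ (A.map Complex.ofReal) := by
  rw [spectrum.mem_iff, isUnit_iff_isUnit_det, isUnit_iff_ne_zero, not_not]
  refine exists_mulVec_eq_zero_iff.mp ⟨Complex.ofReal ∘ v, ?_, ?_⟩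
  · exact fun h0 => hv (funext fun i => Complex.ofReal_injective (congrFun h0 i))
  · ext i
    have hi : (A.map Complex.ofReal *ᵥ Complex.ofReal ∘ v) i = r * v i := by
      rw [← Complex.ofReal_mul, ← smul_eq_mul, ← Pi.smul_apply, ← h]
      exact (RingHom.map_mulVec Complex.ofRealHom A v i).symm
    simp [sub_mulVec, algebraMap_eq_diagonal, mulVec_diagonal, hi]

end WeightedNorm

section SpectralRadius

attribute [local instance] Matrix.linftyOpNormedRing Matrix.linftyOpNormedAlgebra

lemma specRad_le_of_forall_norm_le {M : Matrix (Fin 2) (Fin 2) ℝ} {C : ℝ} (hC : 0 ≤ C)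
    (h : ∀ z ∈ spectrum ℂ (M.map Complex.ofReal), ‖z‖ ≤ C) : specRad M ≤ C :=
  ENNReal.toReal_le_of_le_ofReal hC <| iSup₂_le fun z hz => by
    rw [← enorm_eq_nnnorm, ← ofReal_norm]
    exact ENNReal.ofReal_le_ofReal (h z hz)

lemma norm_le_specRad {M : Matrix (Fin 2) (Fin 2) ℝ} {z : ℂ}
    (hz : z ∈ spectrum ℂ (M.map Complex.ofReal)) : ‖z‖ ≤ specRad M := by
  have hfin : spectralRadius ℂ (M.map Complex.ofReal) ≠ ⊤ :=
    ne_top_of_le_ne_top ENNReal.coe_ne_top (spectrum.spectralRadius_le_nnnorm _)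
  rw [specRad, ← ENNReal.ofReal_le_iff_le_toReal hfin, ofReal_norm, enorm_eq_nnnorm]
  exact le_iSup₂ (f := fun k (_ : k ∈ spectrum ℂ _) => (‖k‖₊ : ENNReal)) z hz

end SpectralRadius

lemma specRad_nonneg (M : Matrix (Fin 2) (Fin 2) ℝ) : 0 ≤ specRad M :=
  ENNReal.toReal_nonneg

lemma specRad_le_weightedNorm {w : Fin 2 → ℝ} (hw : ∀ i, w i ≠ 0) (M : Matrix (Fin 2) (Fin 2) ℝ) :
    specRad M ≤ weightedNorm w M :=
  specRad_le_of_forall_norm_le (weightedNorm_nonneg w M) fun _ hz =>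
    norm_le_weightedNorm_of_mem_spectrum hw hz

lemma specRad_eq_of_mulVec_eq {A : Matrix (Fin 2) (Fin 2) ℝ} (hA : ∀ i j, 0 ≤ A i j)
    {w : Fin 2 → ℝ} (hw : ∀ i, 0 < w i) {r : ℝ} (hr : 0 ≤ r) (h : A *ᵥ w = r • w) :
    specRad A = r := by
  refine le_antisymm ((specRad_le_weightedNorm (fun i => (hw i).ne') A).trans
    (weightedNorm_le_of_mulVec_eq hw hA hr h)) ?_
  have hv : w ≠ 0 := fun h0 => (hw 0).ne' (congrFun h0 0)
  simpa [abs_of_nonneg hr] using norm_le_specRad (ofReal_mem_spectrum_of_mulVec_eq hv h)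

lemma mem_prodsOfLen_one {𝒜 : Set (Matrix (Fin 2) (Fin 2) ℝ)} {A : Matrix (Fin 2) (Fin 2) ℝ}
    (hA : A ∈ 𝒜) : A ∈ prodsOfLen 𝒜 1 :=
  ⟨[A], rfl, by simpa using hA, List.prod_singleton.symm⟩

lemma specRad_rpow_le_of_mem_prodsOfLen {𝒜 : Set (Matrix (Fin 2) (Fin 2) ℝ)} {w : Fin 2 → ℝ}
    (hw : ∀ i, w i ≠ 0) {K : ℝ} (hK : 0 ≤ K) (h : ∀ X ∈ 𝒜, weightedNorm w X ≤ K) {n : ℕ}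
    (hn : n ≠ 0) {M : Matrix (Fin 2) (Fin 2) ℝ} (hM : M ∈ prodsOfLen 𝒜 n) :
    specRad M ^ ((1 : ℝ) / n) ≤ K := by
  obtain ⟨l, rfl, hl, rfl⟩ := hM
  have hρ : specRad l.prod ≤ K ^ l.length := (specRad_le_weightedNorm hw _).trans
    (weightedNorm_list_prod_le hw fun X hX => h X (hl X hX))
  calc specRad l.prod ^ ((1 : ℝ) / l.length) ≤ (K ^ l.length) ^ ((1 : ℝ) / l.length) := by
        gcongr
        exact specRad_nonneg _
    _ = K := by rw [one_div, Real.pow_rpow_inv_natCast hK hn]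

theorem gsr_eq_specRad_of_weightedNorm_le {𝒜 : Set (Matrix (Fin 2) (Fin 2) ℝ)}
    {A : Matrix (Fin 2) (Fin 2) ℝ} (hA : A ∈ 𝒜) {w : Fin 2 → ℝ} (hw : ∀ i, w i ≠ 0)
    (h : ∀ X ∈ 𝒜, weightedNorm w X ≤ specRad A) : gsr 𝒜 = specRad A := by
  have hbound : ∀ x ∈ {x : ℝ | ∃ n : ℕ, 1 ≤ n ∧ ∃ M ∈ prodsOfLen 𝒜 n,
      x = specRad M ^ ((1 : ℝ) / n)}, x ≤ specRad A := by
    rintro _ ⟨n, hn, M, hM, rfl⟩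
    exact specRad_rpow_le_of_mem_prodsOfLen hw (specRad_nonneg A) h (by omega) hM
  exact le_antisymm (Real.sSup_le hbound (specRad_nonneg A))
    (le_csSup ⟨_, hbound⟩ ⟨1, le_rfl, A, mem_prodsOfLen_one hA, by simp⟩)

lemma hasSpectralFiniteness_of_gsr_eq_specRad {𝒜 : Set (Matrix (Fin 2) (Fin 2) ℝ)}
    {A : Matrix (Fin 2) (Fin 2) ℝ} (hA : A ∈ 𝒜) (h : gsr 𝒜 = specRad A) :
    hasSpectralFiniteness 𝒜 :=
  ⟨1, le_rfl, A, mem_prodsOfLen_one hA, by simp [h]⟩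

lemma weightedNorm_le_of_rows {a b c d s K : ℝ} (hs : 0 < s) (hK : 0 ≤ K)
    (h0 : |a| * s + |b| ≤ K * s) (h1 : |c| * s + |d| ≤ K) :
    weightedNorm ![s, 1] !![a, b; c, d] ≤ K := by
  refine weightedNorm_le_of_forall_sum_le (Fin.forall_fin_two.mpr ⟨hs, one_pos⟩) hK
    (Fin.forall_fin_two.mpr ⟨?_, ?_⟩)
  · simpa [Fin.sum_univ_two] using h0
  · simpa [Fin.sum_univ_two] using h1

namespace Example10

noncomputable def perronRoot : ℝ :=
  (Real.sqrt 2 + Real.sqrt 7 + Real.sqrt ((Real.sqrt 7 - Real.sqrt 2) ^ 2 + 800)) / 2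

noncomputable def perronWeight : ℝ := (perronRoot - Real.sqrt 7) / 20

noncomputable def perronVector : Fin 2 → ℝ := ![perronWeight, 1]

lemma perronRoot_charpoly : (perronRoot - Real.sqrt 2) * (perronRoot - Real.sqrt 7) = 200 := by
  have h := Real.sq_sqrt (by positivity : 0 ≤ (Real.sqrt 7 - Real.sqrt 2) ^ 2 + 800)
  unfold perronRoot
  linear_combination (1 / 4 : ℝ) * h

lemma fourteen_le_perronRoot : 14 ≤ perronRoot := by
  have h28 : 28 ≤ Real.sqrt ((Real.sqrt 7 - Real.sqrt 2) ^ 2 + 800) :=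
    (Real.le_sqrt (by norm_num) (by positivity)).mpr (by nlinarith)
  unfold perronRoot
  linarith [Real.sqrt_nonneg 2, Real.sqrt_nonneg 7]

lemma perronRoot_nonneg : 0 ≤ perronRoot := by
  linarith [fourteen_le_perronRoot]

lemma sqrt_le_three {x : ℝ} (hx : x ≤ 9) : Real.sqrt x ≤ 3 :=
  (Real.sqrt_le_left (by norm_num)).mpr (by linarith)

lemma half_le_perronWeight : 1 / 2 ≤ perronWeight := by
  unfold perronWeight
  linarith [fourteen_le_perronRoot, sqrt_le_three (show (7 : ℝ) ≤ 9 by norm_num)]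

lemma perronWeight_le : perronWeight ≤ perronRoot / 20 := by
  unfold perronWeight
  linarith [Real.sqrt_nonneg 7]

lemma perronVector_pos : ∀ i, 0 < perronVector i := by
  simp only [Fin.forall_fin_two, perronVector, Matrix.cons_val_zero, Matrix.cons_val_one]
  exact ⟨by linarith [half_le_perronWeight], one_pos⟩

lemma nonneg_A1 : ∀ i j, 0 ≤ !![Real.sqrt 2, 10; 20, Real.sqrt 7] i j := by
  simp [Fin.forall_fin_two, Real.sqrt_nonneg]

lemma mulVec_perronVector :
    !![Real.sqrt 2, 10; 20, Real.sqrt 7] *ᵥ perronVector = perronRoot • perronVector := by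
  rw [perronVector, mulVec_fin_two, smul_vec2]
  refine vec2_eq ?_ ?_
  · show Real.sqrt 2 * perronWeight + 10 * 1 = perronRoot * perronWeight
    unfold perronWeight
    linear_combination (-1 / 20 : ℝ) * perronRoot_charpoly
  · show 20 * perronWeight + Real.sqrt 7 * 1 = perronRoot * 1
    unfold perronWeight
    ring

lemma weightedNorm_A0_le : weightedNorm perronVector !![Real.sqrt 3, 1; 2, 1.3] ≤ perronRoot := by
  have h14 := fourteen_le_perronRoot
  have hs := half_le_perronWeight
  have hs' := perronWeight_le
  have h3 := sqrt_le_three (show (3 : ℝ) ≤ 9 by norm_num)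
  refine weightedNorm_le_of_rows (by linarith) perronRoot_nonneg ?_ ?_
  · rw [abs_of_nonneg (Real.sqrt_nonneg 3), abs_one]
    nlinarith
  · rw [abs_two, abs_of_pos (by norm_num : (0 : ℝ) < 1.3)]
    linarith

lemma weightedNorm_A2_le :
    weightedNorm perronVector !![-1, 0.1; 0.2, Real.sqrt 5] ≤ perronRoot := by
  have h14 := fourteen_le_perronRoot
  have hs := half_le_perronWeight
  have hs' := perronWeight_le
  have h5 := sqrt_le_three (show (5 : ℝ) ≤ 9 by norm_num)
  refine weightedNorm_le_of_rows (by linarith) perronRoot_nonneg ?_ ?_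
  · rw [abs_neg, abs_one, abs_of_pos (by norm_num : (0 : ℝ) < 0.1)]
    nlinarith
  · rw [abs_of_pos (by norm_num : (0 : ℝ) < 0.2), abs_of_nonneg (Real.sqrt_nonneg 5)]
    linarith

end Example10

open Example10 in
/-- Example 10: for
`A₀ = !![√3, 1; 2, 1.3]`, `A₁ = !![√2, 10; 20, √7]`,
`A₂ = !![-1, 0.1; 0.2, √5]`, the generalized spectral radius of
`{A₀, A₁, A₂}` equals `max {ρ(A₀), ρ(A₁), ρ(A₂)}`; in particular the family
has the spectral finiteness property. -/
theorem gsr_example10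
    (A0 A1 A2 : Matrix (Fin 2) (Fin 2) ℝ)
    (hA0 : A0 = !![Real.sqrt 3, 1; 2, 1.3])
    (hA1 : A1 = !![Real.sqrt 2, 10; 20, Real.sqrt 7])
    (hA2 : A2 = !![-1, 0.1; 0.2, Real.sqrt 5]) :
    gsr {A0, A1, A2} = max (specRad A0) (max (specRad A1) (specRad A2)) ∧
      hasSpectralFiniteness {A0, A1, A2} := by
  have hw : ∀ i, perronVector i ≠ 0 := fun i => (perronVector_pos i).ne'
  have hρ1 : specRad A1 = perronRoot := hA1 ▸
    specRad_eq_of_mulVec_eq nonneg_A1 perronVector_pos perronRoot_nonneg mulVec_perronVector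
  have hbound : ∀ X ∈ ({A0, A1, A2} : Set _), weightedNorm perronVector X ≤ perronRoot := by
    simp only [Set.mem_insert_iff, Set.mem_singleton_iff]
    rintro X (rfl | rfl | rfl)
    · exact hA0 ▸ weightedNorm_A0_le
    · exact hA1 ▸ weightedNorm_le_of_mulVec_eq perronVector_pos nonneg_A1 perronRoot_nonneg
        mulVec_perronVector
    · exact hA2 ▸ weightedNorm_A2_le
  have hρ : ∀ X ∈ ({A0, A1, A2} : Set _), specRad X ≤ specRad A1 := fun X hX =>
    hρ1 ▸ (specRad_le_weightedNorm hw X).trans (hbound X hX)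
  have hgsr : gsr {A0, A1, A2} = specRad A1 :=
    gsr_eq_specRad_of_weightedNorm_le (by simp) hw (hρ1 ▸ hbound)
  refine ⟨?_, hasSpectralFiniteness_of_gsr_eq_specRad (by simp) hgsr⟩
  rw [hgsr, max_eq_left (hρ A2 (by simp)), max_eq_right (hρ A0 (by simp))]
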